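/- arXiv:math/0312485 — 4 statements merged into one kernel-verified Lean document; each statement's English description precedes it below -/
import Mathlib

section
/- A permutation τ of Hom(W(X), G) ≅ (X → G) commutes with all quantifiers ∃x (i.e., τ(∃x A) = ∃x (τ A) for all x ∈ X and A) if and only if τ is correct, meaning for all μ, ν : X → G and all x ∈ X: μ(x) = ν(x) ↔ (τμ)(x) = (τν)(x). -/
/-- The operator `∃x` on subsets of the affine space `X → G`. -/
def existsQ {X G : Type*} (x : X) (A : Set (X → G)) : Set (X → G) :=
  {μ | ∃ ν ∈ A, ∀ y ≠ x, μ y = ν y}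

/-- If a map preserves the relations "agree off `x`" for every `x`, then it
preserves pointwise agreement. -/
lemma aux_pointwise {X G : Type*} [Fintype X] (τ : (X → G) → (X → G))
    (h : ∀ (x : X) (μ ν : X → G), (∀ y ≠ x, μ y = ν y) → ∀ y ≠ x, τ μ y = τ ν y)
    (μ ν : X → G) (x : X) (hx : μ x = ν x) : τ μ x = τ ν x := by
  classical
  suffices H : ∀ n (μ ν : X → G), μ x = ν x →
      (Finset.univ.filter (fun y => μ y ≠ ν y)).card = n → τ μ x = τ ν x from
    H _ μ ν hx rfl
  intro n
  induction n with
  | zero =>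
    intro μ ν hx hc
    have : μ = ν := by
      funext z
      by_contra hz
      have : z ∈ Finset.univ.filter (fun y => μ y ≠ ν y) := by simp [hz]
      rw [Finset.card_eq_zero] at hc
      simp [hc] at this
    rw [this]
  | succ n ih =>
    intro μ ν hx hc
    obtain ⟨y, hy⟩ : (Finset.univ.filter (fun y => μ y ≠ ν y)).Nonempty := by
      rw [← Finset.card_pos, hc]; omega
    have hyne : μ y ≠ ν y := by simpa using hy
    have hyx : y ≠ x := fun h => hyne (h ▸ hx)
    set ν' := Function.update μ y (ν y) with hν'
    have h1 : τ μ x = τ ν' x := by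
      refine h y μ ν' ?_ x (Ne.symm hyx)
      intro z hz
      simp [hν', Function.update_of_ne hz]
    have hset : Finset.univ.filter (fun z => ν' z ≠ ν z)
        = (Finset.univ.filter (fun z => μ z ≠ ν z)).erase y := by
      ext z
      by_cases hzy : z = y
      · subst hzy; simp [hν']
      · simp [hν', Function.update_of_ne hzy, hzy]
    have h2 : τ ν' x = τ ν x := by
      refine ih ν' ν ?_ ?_
      · rw [hν', Function.update_of_ne (Ne.symm hyx)]; exact hx
      · rw [hset, Finset.card_erase_of_mem hy, hc]; omega
    rw [h1, h2]

/-- A permutation `τ` of the affine space commutes with all quantifiers `∃x`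
iff it is correct. -/
theorem commutes_with_quantifiers_iff_correct {X G : Type*} [Fintype X]
    (τ : Equiv.Perm (X → G)) :
    (∀ (x : X) (A : Set (X → G)), τ '' existsQ x A = existsQ x (τ '' A)) ↔
    (∀ (μ ν : X → G) (x : X), μ x = ν x ↔ τ μ x = τ ν x) := by
  constructor
  · intro hcomm
    -- τ preserves "agree off x"
    have hstar : ∀ (x : X) (μ ν : X → G), (∀ y ≠ x, μ y = ν y) →
        ∀ y ≠ x, τ μ y = τ ν y := by
      intro x μ ν hag
      have hμ : τ μ ∈ τ '' existsQ x {ν} := ⟨μ, ⟨ν, rfl, hag⟩, rfl⟩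
      rw [hcomm x {ν}] at hμ
      obtain ⟨ρ, hρ, hag'⟩ := hμ
      obtain ⟨ρ', hρ', rfl⟩ := hρ
      rw [Set.mem_singleton_iff] at hρ'
      subst hρ'
      exact hag'
    -- τ.symm preserves "agree off x"
    have hstar' : ∀ (x : X) (μ ν : X → G), (∀ y ≠ x, μ y = ν y) →
        ∀ y ≠ x, τ.symm μ y = τ.symm ν y := by
      intro x μ ν hag
      have hμ : μ ∈ existsQ x (τ '' {τ.symm ν}) := by
        refine ⟨τ (τ.symm ν), ⟨τ.symm ν, rfl, rfl⟩, ?_⟩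
        simpa using hag
      rw [← hcomm x {τ.symm ν}] at hμ
      obtain ⟨ρ, ⟨ρ', hρ', hagρ⟩, hτρ⟩ := hμ
      rw [Set.mem_singleton_iff] at hρ'
      subst hρ'
      have : ρ = τ.symm μ := by rw [← hτρ]; simp
      subst this
      exact hagρ
    intro μ ν x
    constructor
    · exact fun hx => aux_pointwise τ hstar μ ν x hx
    · intro hx
      have := aux_pointwise τ.symm hstar' (τ μ) (τ ν) x hx
      simpa using this
  · intro hcor x A
    ext μ'
    constructor
    · rintro ⟨μ, ⟨ν, hν, hag⟩, rfl⟩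
      exact ⟨τ ν, ⟨ν, hν, rfl⟩, fun y hy => (hcor μ ν y).mp (hag y hy)⟩
    · rintro ⟨ρ, ⟨ν, hν, rfl⟩, hag⟩
      refine ⟨τ.symm μ', ⟨ν, hν, fun y hy => ?_⟩, by simp⟩
      have := (hcor (τ.symm μ') ν y).mpr
      simp only [Equiv.apply_symm_apply] at this
      exact this (hag y hy)
end

section
/- A permutation τ of the set of functions X → G is correct (∀ μ ν x, μ x = ν x ↔ (τμ) x = (τν) x) if and only if there exists a family ζ of permutations of G indexed by X such that (τ μ)(x) = ζ(x)(μ(x)) for all μ and x. -/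
/-- A permutation of the affine space `X → G` is correct iff it acts pointwise
by a family of permutations of `G` indexed by `X`. -/
theorem correct_iff_pointwise {X G : Type*} [Nonempty G]
    (τ : Equiv.Perm (X → G)) :
    (∀ (μ ν : X → G) (x : X), μ x = ν x ↔ τ μ x = τ ν x) ↔
    (∃ ζ : X → Equiv.Perm G, ∀ (μ : X → G) (x : X), τ μ x = ζ x (μ x)) := by
  constructor
  · intro h
    have key : ∀ (x : X) (μ : X → G), τ μ x = τ (fun _ => μ x) x :=
      fun x μ => (h μ (fun _ => μ x) x).mp rfl
    refine ⟨fun x => Equiv.ofBijective (fun g => τ (fun _ => g) x) ⟨?_, ?_⟩, ?_⟩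
    · intro g g' hg
      exact (h (fun _ => g) (fun _ => g') x).mpr hg
    · intro h'
      refine ⟨τ.symm (fun _ => h') x, ?_⟩
      simp only
      rw [← key x (τ.symm (fun _ => h'))]
      simp
    · intro μ x
      simpa [Equiv.ofBijective] using key x μ
  · rintro ⟨ζ, hζ⟩ μ ν x
    rw [hζ, hζ]
    exact ⟨fun e => by rw [e], fun e => (ζ x).injective e⟩
end

section
/- If two models f₁ and f₂ over the same formulas are geometrically equivalent (T^{f₁f₁} = T^{f₂f₂} for every set T of formulas), then the closure operators induce a bijection between the algebraic sets of f₁ and those of f₂, given by A ↦ A^{f₁ f₂} with inverse B ↦ B^{f₂ f₁}. -/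
private lemma triple_inter {F P : Type*} (Val : F → Set P) (T : Set F) :
    (⋂ u ∈ {v : F | (⋂ w ∈ T, Val w) ⊆ Val v}, Val u) = ⋂ u ∈ T, Val u := by
  ext x
  simp only [Set.mem_iInter, Set.mem_setOf_eq]
  constructor
  · intro h u hu
    exact h u (fun y hy => by simp only [Set.mem_iInter] at hy; exact hy u hu)
  · intro h v hv
    exact hv (by simp only [Set.mem_iInter]; exact h)

private lemma key {F P₁ P₂ : Type*} (Val₁ : F → Set P₁) (Val₂ : F → Set P₂)
    (hge : ∀ T : Set F,
      {u : F | (⋂ v ∈ T, Val₁ v) ⊆ Val₁ u} = {u : F | (⋂ v ∈ T, Val₂ v) ⊆ Val₂ u})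
    (A : Set P₁) (T : Set F) (hA : A = ⋂ u ∈ T, Val₁ u) :
    (⋂ u ∈ {v : F | (⋂ w ∈ {v : F | A ⊆ Val₁ v}, Val₂ w) ⊆ Val₂ v}, Val₁ u) = A := by
  set S : Set F := {v : F | A ⊆ Val₁ v} with hS
  have h1 : {v : F | (⋂ w ∈ S, Val₂ w) ⊆ Val₂ v} = {v : F | (⋂ w ∈ S, Val₁ w) ⊆ Val₁ v} :=
    (hge S).symm
  rw [h1, triple_inter]
  -- now show ⋂ u ∈ S, Val₁ u = A
  have h2 : S = {v : F | (⋂ w ∈ T, Val₁ w) ⊆ Val₁ v} := by rw [hS, hA]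
  rw [h2, triple_inter, ← hA]

/-- Geometric equivalence of two models induces a bijection between their
algebraic sets, given by `A ↦ A^{f₁f₂}` with inverse `B ↦ B^{f₂f₁}`. -/
theorem geometric_equivalence_bijection_of_algebraic_sets
    {F P₁ P₂ : Type*} (Val₁ : F → Set P₁) (Val₂ : F → Set P₂)
    (hge : ∀ T : Set F,
      {u : F | (⋂ v ∈ T, Val₁ v) ⊆ Val₁ u} = {u : F | (⋂ v ∈ T, Val₂ v) ⊆ Val₂ u}) :
    (∀ A : Set P₁, (∃ T : Set F, A = ⋂ u ∈ T, Val₁ u) →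
      (∃ T : Set F, (⋂ u ∈ {v : F | A ⊆ Val₁ v}, Val₂ u) = ⋂ u ∈ T, Val₂ u) ∧
      (⋂ u ∈ {v : F | (⋂ w ∈ {v : F | A ⊆ Val₁ v}, Val₂ w) ⊆ Val₂ v}, Val₁ u) = A) ∧
    (∀ B : Set P₂, (∃ T : Set F, B = ⋂ u ∈ T, Val₂ u) →
      (∃ T : Set F, (⋂ u ∈ {v : F | B ⊆ Val₂ v}, Val₁ u) = ⋂ u ∈ T, Val₁ u) ∧
      (⋂ u ∈ {v : F | (⋂ w ∈ {v : F | B ⊆ Val₂ v}, Val₁ w) ⊆ Val₁ v}, Val₂ u) = B) := by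
  constructor
  · rintro A ⟨T, hA⟩
    exact ⟨⟨{v : F | A ⊆ Val₁ v}, rfl⟩, key Val₁ Val₂ hge A T hA⟩
  · rintro B ⟨T, hB⟩
    exact ⟨⟨{v : F | B ⊆ Val₂ v}, rfl⟩, key Val₂ Val₁ (fun T => (hge T).symm) B T hB⟩
end

section
/- The elementary theory of a model is the minimal f-closed set of formulas: if A = Set.univ is the whole affine space, then T = A^f = {u | Val_f(u) = Set.univ} is f-closed and is contained in every f-closed set of formulas; consequently, if two models are geometrically equivalent then they are elementarily equivalent (they have the same set of universally valid formulas). -/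
/-- The elementary theory is the minimal closed set of formulas, and geometrically
equivalent models are elementarily equivalent. -/
theorem geometric_equivalence_implies_elementary_equivalence
    {F P₁ P₂ : Type*} (Val₁ : F → Set P₁) (Val₂ : F → Set P₂)
    (hge : ∀ T : Set F,
      {u : F | (⋂ v ∈ T, Val₁ v) ⊆ Val₁ u} = {u : F | (⋂ v ∈ T, Val₂ v) ⊆ Val₂ u}) :
    ({u : F | Val₁ u = Set.univ} = {u : F | (Set.univ : Set P₁) ⊆ Val₁ u}) ∧
    (∀ A : Set P₁, {u : F | Val₁ u = Set.univ} ⊆ {u : F | A ⊆ Val₁ u}) ∧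
    {u : F | Val₁ u = Set.univ} = {u : F | Val₂ u = Set.univ} := by
  have h1 : {u : F | Val₁ u = Set.univ} = {u : F | (Set.univ : Set P₁) ⊆ Val₁ u} := by
    ext u; simp [Set.eq_univ_iff_forall, Set.subset_def]
  refine ⟨h1, fun A u hu => ?_, ?_⟩
  · simp only [Set.mem_setOf_eq] at *; rw [hu]; exact Set.subset_univ A
  · have := hge ∅
    simp only [Set.mem_empty_iff_false, Set.iInter_of_empty, Set.iInter_univ] at this
    rw [h1, this]
    ext u; simp [Set.eq_univ_iff_forall, Set.subset_def]
end
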